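/- Let α ∈ (0,1] and λ ≥ 1, and let τ > 0. Consider the scalar scheme arising from one eigenmode of (4.0-1): v_{n+1} = v_n - τ λ^α z_{n+1} + τ f_n, z_{n+1} = z_n + τ v_{n+1}, where (f_n) are reals with |f_n| ≤ F. Then the discrete energy E_n = λ^{-α} v_n² + z_n² satisfies E_{n+1} ≤ E_n + 2τ λ^{-α/2} F √(E_{n+1}) + τ λ^{-α}(F² + v_{n+1}²), and in particular E_{n+1} - E_n ≤ τ (F² + E_{n+1}). -/
import Mathlib


set_option maxHeartbeats 1000000 in
theorem low_order_scheme_energy (α lam τ F : ℝ) (v z f : ℕ → ℝ)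
    (hα0 : 0 < α) (hα1 : α ≤ 1) (hlam : 1 ≤ lam) (hτ : 0 < τ)
    (hf : ∀ n, |f n| ≤ F)
    (hv : ∀ n, v (n + 1) = v n - τ * lam ^ α * z (n + 1) + τ * f n)
    (hz : ∀ n, z (n + 1) = z n + τ * v (n + 1)) :
    ∀ n : ℕ,
      (lam ^ (-α) * v (n+1) ^ 2 + z (n+1) ^ 2) ≤
        (lam ^ (-α) * v n ^ 2 + z n ^ 2) +
          2 * τ * lam ^ (-(α/2)) * F * Real.sqrt (lam ^ (-α) * v (n+1) ^ 2 + z (n+1) ^ 2) +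
          τ * lam ^ (-α) * (F ^ 2 + v (n+1) ^ 2) ∧
      (lam ^ (-α) * v (n+1) ^ 2 + z (n+1) ^ 2) - (lam ^ (-α) * v n ^ 2 + z n ^ 2) ≤
        τ * (F ^ 2 + (lam ^ (-α) * v (n+1) ^ 2 + z (n+1) ^ 2)) := by
  intro n
  have hlam0 : (0:ℝ) < lam := lt_of_lt_of_le one_pos hlam
  have hμ1 : (1:ℝ) ≤ lam ^ α := Real.one_le_rpow hlam hα0.le
  have hμ0 : (0:ℝ) < lam ^ α := lt_of_lt_of_le one_pos hμ1
  have hinv : lam ^ (-α) = (lam ^ α)⁻¹ := Real.rpow_neg hlam0.le α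
  have hinv0 : (0:ℝ) < (lam ^ α)⁻¹ := inv_pos.mpr hμ0
  have hinv1 : (lam ^ α)⁻¹ ≤ 1 := inv_le_one_of_one_le₀ hμ1
  have hF : 0 ≤ F := le_trans (abs_nonneg _) (hf 0)
  set s : ℝ := lam ^ (-(α/2)) with hs
  have hs0 : 0 < s := Real.rpow_pos_of_pos hlam0 _
  have hss : s * s = (lam ^ α)⁻¹ := by
    rw [hs, ← Real.rpow_add hlam0, ← hinv]; ring_nf
  set E : ℝ := (lam ^ α)⁻¹ * v n ^ 2 + z n ^ 2 with hE
  set E' : ℝ := (lam ^ α)⁻¹ * v (n+1) ^ 2 + z (n+1) ^ 2 with hE'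
  have hE'0 : 0 ≤ E' := by positivity
  clear_value s E E'
  -- key energy identity and inequality
  have e1 : v (n+1) - v n = -(τ * lam ^ α * z (n+1)) + τ * f n := by rw [hv n]; ring
  have e2 : z (n+1) - z n = τ * v (n+1) := by rw [hz n]; ring
  have id1 : (lam ^ α)⁻¹ * v (n+1) * (v (n+1) - v n) + z (n+1) * (z (n+1) - z n)
      = τ * (lam ^ α)⁻¹ * f n * v (n+1) := by
    rw [e1, e2]; field_simp; ring
  have key : E' ≤ E + 2 * (τ * (lam ^ α)⁻¹ * f n * v (n+1)) := by
    nlinarith [id1, mul_nonneg hinv0.le (sq_nonneg (v (n+1) - v n)),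
      sq_nonneg (z (n+1) - z n)]
  -- bound on |v'| part: s * |v (n+1)| ≤ sqrt E'
  have hA : s * |v (n+1)| ≤ Real.sqrt E' := by
    have h1 : (s * |v (n+1)|) ^ 2 ≤ E' := by
      have : (s * |v (n+1)|) ^ 2 = (lam ^ α)⁻¹ * v (n+1) ^ 2 := by
        rw [mul_pow, sq_abs]; rw [sq, hss]
      rw [this]; nlinarith [sq_nonneg (z (n+1))]
    have h0 : 0 ≤ s * |v (n+1)| := mul_nonneg hs0.le (abs_nonneg _)
    exact (Real.le_sqrt h0 hE'0).mpr h1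
  have hfv : τ * (lam ^ α)⁻¹ * f n * v (n+1) ≤ τ * s * F * Real.sqrt E' := by
    have h1 : f n * v (n+1) ≤ F * |v (n+1)| := by
      calc f n * v (n+1) ≤ |f n * v (n+1)| := le_abs_self _
        _ = |f n| * |v (n+1)| := abs_mul _ _
        _ ≤ F * |v (n+1)| := mul_le_mul_of_nonneg_right (hf n) (abs_nonneg _)
    have h2 : τ * (lam ^ α)⁻¹ * (f n * v (n+1)) ≤ τ * (lam ^ α)⁻¹ * (F * |v (n+1)|) :=
      mul_le_mul_of_nonneg_left h1 (by positivity)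
    have h3 : τ * (lam ^ α)⁻¹ * (F * |v (n+1)|) = τ * s * F * (s * |v (n+1)|) := by
      rw [← hss]; ring
    have h4 : τ * s * F * (s * |v (n+1)|) ≤ τ * s * F * Real.sqrt E' :=
      mul_le_mul_of_nonneg_left hA (by positivity)
    linarith [h2, h3 ▸ h2]
  constructor
  · rw [hinv, ← hE', ← hE]
    have : 0 ≤ τ * (lam ^ α)⁻¹ * (F ^ 2 + v (n+1) ^ 2) := by positivity
    calc E'
        ≤ E + 2 * (τ * (lam ^ α)⁻¹ * f n * v (n+1)) := key
      _ ≤ E + 2 * (τ * s * F * Real.sqrt E') := by linarith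
      _ ≤ E + 2 * τ * s * F * Real.sqrt E' + τ * (lam ^ α)⁻¹ * (F ^ 2 + v (n+1) ^ 2) := by
          linarith
  · rw [hinv, ← hE', ← hE]
    have hf2 : f n ^ 2 ≤ F ^ 2 := by
      have := hf n
      nlinarith [abs_nonneg (f n), sq_abs (f n)]
    have c1 : 2 * (f n * v (n+1)) ≤ f n ^ 2 + v (n+1) ^ 2 := by
      nlinarith [sq_nonneg (f n - v (n+1))]
    have c2 : 2 * (τ * (lam ^ α)⁻¹ * f n * v (n+1))
        ≤ τ * (lam ^ α)⁻¹ * (f n ^ 2 + v (n+1) ^ 2) := by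
      have := mul_le_mul_of_nonneg_left c1 (by positivity : (0:ℝ) ≤ τ * (lam ^ α)⁻¹)
      linarith [this]
    have c3 : τ * (lam ^ α)⁻¹ * f n ^ 2 ≤ τ * F ^ 2 := by
      have h1 : (lam ^ α)⁻¹ * f n ^ 2 ≤ 1 * F ^ 2 :=
        mul_le_mul hinv1 hf2 (sq_nonneg _) zero_le_one
      nlinarith [h1]
    have c4 : τ * ((lam ^ α)⁻¹ * v (n+1) ^ 2) ≤ τ * E' := by
      have : (lam ^ α)⁻¹ * v (n+1) ^ 2 ≤ E' := by
        rw [hE']; nlinarith [sq_nonneg (z (n+1))]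
      exact mul_le_mul_of_nonneg_left this hτ.le
    have : E' - E ≤ τ * (F ^ 2 + E') := by
      have k2 : E' - E ≤ τ * (lam ^ α)⁻¹ * (f n ^ 2 + v (n+1) ^ 2) := by linarith
      have : τ * (lam ^ α)⁻¹ * (f n ^ 2 + v (n+1) ^ 2)
          = τ * (lam ^ α)⁻¹ * f n ^ 2 + τ * ((lam ^ α)⁻¹ * v (n+1) ^ 2) := by ring
      linarith [this ▸ k2]
    linarith [this]
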